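/- Let D be a Hamiltonian digraph and C a Hamiltonian cycle of D. If for every vertex v of D there is an even chord of C with head v, then D has a strong 2-partition. -/

import Mathlib

/-!
Common definitions: digraphs as adjacency relations, directed walks and paths,
arc-colourings, proper connection and proper-walk connection numbers,
strong digraphs, bipartite digraphs, Hamiltonian cycles, chords,
circulant digraphs and strong 2-partitions.
-/

namespace PCDigraph

variable {V : Type*}

/-- A directed walk from `u` to `v` in the digraph with adjacency relation `Adj`. -/
inductive DWalk (Adj : V → V → Prop) : V → V → Type _
  | nil {v : V} : DWalk Adj v v
  | cons {u v w : V} (h : Adj u v) (p : DWalk Adj v w) : DWalk Adj u w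

namespace DWalk

variable {Adj : V → V → Prop}

/-- The list of arcs of a directed walk. -/
def arcs : ∀ {u v : V}, DWalk Adj u v → List (V × V)
  | _, _, .nil => []
  | u, _, .cons (v := w) _ p => (u, w) :: p.arcs

/-- The list of vertices visited by a directed walk. -/
def support : ∀ {u v : V}, DWalk Adj u v → List V
  | u, _, .nil => [u]
  | u, _, .cons _ p => u :: p.support

/-- A directed walk is a (directed) path if it visits no vertex twice. -/
def IsPath {u v : V} (p : DWalk Adj u v) : Prop := p.support.Nodup

end DWalk

/-- A directed walk is properly coloured under the arc-colouring `c` if no two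
consecutive arcs of the walk receive the same colour. -/
def ProperlyColoured {Adj : V → V → Prop} (c : V → V → ℕ) {u v : V}
    (p : DWalk Adj u v) : Prop :=
  (p.arcs.map fun e => c e.1 e.2).Chain' (· ≠ ·)

/-- `c` is an arc-colouring using colours in `{1, …, k}` that makes the digraph
properly connected: between every ordered pair of distinct vertices there is a
properly coloured directed path. -/
def IsPCColouring (Adj : V → V → Prop) (k : ℕ) (c : V → V → ℕ) : Prop :=
  (∀ u v : V, Adj u v → c u v ∈ Finset.Icc 1 k) ∧
    ∀ u v : V, u ≠ v → ∃ p : DWalk Adj u v, p.IsPath ∧ ProperlyColoured c p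

/-- `c` is an arc-colouring using colours in `{1, …, k}` that makes the digraph
properly-walk connected: between every ordered pair of distinct vertices there
is a properly coloured directed walk. -/
def IsWCColouring (Adj : V → V → Prop) (k : ℕ) (c : V → V → ℕ) : Prop :=
  (∀ u v : V, Adj u v → c u v ∈ Finset.Icc 1 k) ∧
    ∀ u v : V, u ≠ v → ∃ p : DWalk Adj u v, ProperlyColoured c p

/-- The proper connection number of a digraph. -/
noncomputable def pc (Adj : V → V → Prop) : ℕ :=
  sInf {k : ℕ | ∃ c : V → V → ℕ, IsPCColouring Adj k c}

/-- The proper-walk connection number of a digraph. -/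
noncomputable def wc (Adj : V → V → Prop) : ℕ :=
  sInf {k : ℕ | ∃ c : V → V → ℕ, IsWCColouring Adj k c}

/-- A digraph is strong if for every ordered pair of vertices there is a
directed path from the first to the second. -/
def Strong (Adj : V → V → Prop) : Prop :=
  ∀ u v : V, ∃ p : DWalk Adj u v, p.IsPath

/-- A digraph is bipartite if its vertex set can be partitioned into two sets
such that every arc joins vertices from different sets. -/
def Bipartite (Adj : V → V → Prop) : Prop :=
  ∃ V₁ V₂ : Set V, V₁ ∪ V₂ = Set.univ ∧ Disjoint V₁ V₂ ∧
    ∀ u v : V, Adj u v → (u ∈ V₁ ∧ v ∈ V₂) ∨ (u ∈ V₂ ∧ v ∈ V₁)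

/-- The out-degree of a vertex: the number of arcs with tail at that vertex. -/
noncomputable def outDeg (Adj : V → V → Prop) (v : V) : ℕ := {w | Adj v w}.ncard

/-- The in-degree of a vertex: the number of arcs with head at that vertex. -/
noncomputable def inDeg (Adj : V → V → Prop) (v : V) : ℕ := {w | Adj w v}.ncard

/-- `x` enumerates a Hamiltonian cycle of the digraph: it is a bijective
enumeration of the vertices, consecutive vertices (cyclically) being joined
by an arc. -/
def IsHamCycle [Fintype V] (Adj : V → V → Prop)
    (x : ZMod (Fintype.card V) → V) : Prop :=
  Function.Bijective x ∧ ∀ i : ZMod (Fintype.card V), Adj (x i) (x (i + 1))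

/-- A digraph is Hamiltonian if it has a Hamiltonian cycle. -/
def Hamiltonian [Fintype V] (Adj : V → V → Prop) : Prop :=
  ∃ x : ZMod (Fintype.card V) → V, IsHamCycle Adj x

/-- For a Hamiltonian cycle enumerated by `x`, the arc `x p → x q` is a chord
if it is not an arc of the cycle, i.e. `q ≠ p + 1`. -/
def IsChord [Fintype V] (Adj : V → V → Prop)
    (x : ZMod (Fintype.card V) → V) (p q : ZMod (Fintype.card V)) : Prop :=
  Adj (x p) (x q) ∧ q ≠ p + 1

/-- The length of the chord from `x p` to `x q`: the length of the directed
path from `x p` to `x q` along the cycle. -/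
def chordLength [Fintype V] (p q : ZMod (Fintype.card V)) : ℕ := (q - p).val

/-- The circulant digraph `C_n(S)`, with vertex set `ZMod n` and an arc from
`i` to `j` whenever `j - i ≡ s (mod n)` for some `s ∈ S`. -/
def circulantAdj (n : ℕ) (S : Finset ℕ) : ZMod n → ZMod n → Prop :=
  fun i j => ∃ s ∈ S, j - i = (s : ZMod n)

/-- A strong 2-partition of a digraph: a partition of the vertex set into two
parts such that the spanning bipartite subdigraph induced by the arcs having
one end in each part is strong. -/
def HasStrongTwoPartition (Adj : V → V → Prop) : Prop :=
  ∃ V₁ V₂ : Set V, V₁ ∪ V₂ = Set.univ ∧ Disjoint V₁ V₂ ∧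
    Strong (fun u v => Adj u v ∧ ((u ∈ V₁ ∧ v ∈ V₂) ∨ (u ∈ V₂ ∧ v ∈ V₁)))

end PCDigraph

open PCDigraph

/-!
Colour `x i` by the parity of its position `(i - t).val` along the cycle read from a cut point `t`.
Every arc of the cycle except `x (t - 1) → x t` joins the two colours, and when `n` is odd so does
every even chord jumping backwards over the cut. Hence the bipartite subdigraph is strong as soon
as `x t` is reachable from `x (t - 1)`, which is automatic for `n` even. For `n` odd, let `σ` send
each vertex to the tail of an even chord entering it: the vertices not reachable from `x (t - 1)`
form a `σ`-invariant proper cyclic interval starting at `t`, and a cut point `t` at which no such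
interval starts is obtained from a shortest `σ`-invariant proper cyclic interval.
-/

open Relation Set

namespace PCDigraph

section Walks

variable {V : Type*} {Adj : V → V → Prop}

lemma DWalk.exists_support_sublist_of_mem {v w : V} (p : DWalk Adj v w) {u : V}
    (hu : u ∈ p.support) : ∃ q : DWalk Adj u w, q.support.Sublist p.support := by
  induction p with
  | nil =>
    obtain rfl := List.mem_singleton.mp hu
    exact ⟨.nil, .refl _⟩
  | cons h p ih =>
    rcases List.mem_cons.mp hu with rfl | hu
    · exact ⟨.cons h p, .refl _⟩
    · obtain ⟨q, hq⟩ := ih hu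
      exact ⟨q, hq.cons _⟩

lemma DWalk.exists_isPath_of_reflTransGen {u v : V} (h : ReflTransGen Adj u v) :
    ∃ p : DWalk Adj u v, p.IsPath := by
  induction h using ReflTransGen.head_induction_on with
  | refl => exact ⟨.nil, List.nodup_singleton _⟩
  | @head a b hab _ ih =>
    obtain ⟨q, hq⟩ := ih
    by_cases ha : a ∈ q.support
    · obtain ⟨q', hq'⟩ := q.exists_support_sublist_of_mem ha
      exact ⟨q', hq'.nodup hq⟩
    · exact ⟨.cons hab q, List.nodup_cons.mpr ⟨ha, hq⟩⟩

lemma strong_of_reflTransGen (h : ∀ u v, ReflTransGen Adj u v) : Strong Adj :=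
  fun u v => DWalk.exists_isPath_of_reflTransGen (h u v)

end Walks

section TwoPartition

variable {V W : Type*} {Adj : V → V → Prop}

/-- `B_D(V₁, V₂)` for the 2-partition `V₁ = {v | c v}`, `V₂ = {v | ¬ c v}`. -/
def cutDigraph (Adj : V → V → Prop) (c : V → Prop) (u v : V) : Prop :=
  Adj u v ∧ ¬(c u ↔ c v)

lemma hasStrongTwoPartition_of_reflTransGen (c : V → Prop)
    (h : ∀ u v, ReflTransGen (cutDigraph Adj c) u v) : HasStrongTwoPartition Adj := by
  refine ⟨{v | c v}, {v | c v}ᶜ, union_compl_self _, disjoint_compl_right,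
    strong_of_reflTransGen fun u v => ReflTransGen.mono ?_ u v (h u v)⟩
  rintro a b ⟨hab, hc⟩
  exact ⟨hab, by simp only [mem_ofPred_eq, mem_compl_iff]; tauto⟩

lemma hasStrongTwoPartition_of_bijective {x : W → V} (hx : Function.Bijective x) (c : W → Prop)
    (h : ∀ i j, ReflTransGen (cutDigraph (fun i j => Adj (x i) (x j)) c) i j) :
    HasStrongTwoPartition Adj := by
  refine hasStrongTwoPartition_of_reflTransGen (· ∈ x '' {i | c i}) fun u v => ?_
  obtain ⟨i, rfl⟩ := hx.2 u
  obtain ⟨j, rfl⟩ := hx.2 v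
  refine ReflTransGen.lift x (fun a b hab => ⟨hab.1, ?_⟩) i j (h i j)
  simpa only [hx.1.mem_set_image, mem_ofPred_eq] using hab.2

end TwoPartition

end PCDigraph

namespace ZMod

variable {n : ℕ}

lemma val_add_one_of_lt {a : ZMod n} (h : a.val + 1 < n) : (a + 1).val = a.val + 1 := by
  have h1 : (1 : ZMod n).val = 1 := val_one'' (by omega)
  rw [val_add_of_lt (by rwa [h1]), h1]

variable [NeZero n]

lemma val_neg_one_eq_sub_one : (-1 : ZMod n).val = n - 1 := by
  obtain ⟨k, rfl⟩ := Nat.exists_eq_succ_of_ne_zero (NeZero.ne n)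
  simp

lemma val_add_one_of_ne_neg_one {a : ZMod n} (h : a ≠ -1) : (a + 1).val = a.val + 1 := by
  refine val_add_one_of_lt (lt_of_le_of_ne (val_lt a) fun ha => h (val_injective n ?_))
  rw [val_neg_one_eq_sub_one]
  omega

lemma val_sub_one_sub_self (t : ZMod n) : (t - 1 - t).val = n - 1 := by
  rw [sub_sub_cancel_left, val_neg_one_eq_sub_one]

lemma val_sub_of_lt {a b : ZMod n} (h : a.val < b.val) : (a - b).val = n + a.val - b.val := by
  by_cases hn : n ≤ (a - b).val + b.val
  · have := val_add_of_le hn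
    rw [sub_add_cancel] at this
    omega
  · have := val_add_of_lt (not_le.mp hn)
    rw [sub_add_cancel] at this
    omega

end ZMod

namespace PCDigraph

section CyclicInterval

variable {n : ℕ}

def cyclicInterval (t : ZMod n) (m : ℕ) : Set (ZMod n) := {i | (i - t).val ≤ m}

lemma cyclicInterval_zero (t : ZMod n) : cyclicInterval t 0 = {t} := by
  ext i
  simp [cyclicInterval, sub_eq_zero]

variable [NeZero n]

lemma cyclicInterval_inter_cyclicInterval_add_one {a : ZMod n} {m k : ℕ} (hm : 0 < m)
    (hk : k + 1 < n) :
    cyclicInterval a m ∩ cyclicInterval (a + 1) k = cyclicInterval (a + 1) (min k (m - 1)) := by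
  ext i
  simp only [cyclicInterval, mem_inter_iff, mem_ofPred_eq]
  by_cases hi : i = a
  · have : (i - (a + 1)).val = n - 1 := by
      rw [hi, show a - (a + 1) = -1 by ring, ZMod.val_neg_one_eq_sub_one]
    omega
  · have h := ZMod.val_add_one_of_ne_neg_one (a := i - (a + 1))
      fun h => hi (by linear_combination h)
    rw [show i - (a + 1) + 1 = i - a by ring] at h
    omega

/-- A cyclic interval of minimal length invariant under `σ` has at least two points; shifting its
start by one and intersecting with it shows that no proper interval starting there is invariant. -/
theorem exists_forall_not_mapsTo_cyclicInterval (σ : ZMod n → ZMod n) (hσ : ∀ i, σ i ≠ i) :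
    ∃ t : ZMod n, ∀ m, m + 1 < n → ¬MapsTo σ (cyclicInterval t m) (cyclicInterval t m) := by
  by_contra! h
  have key : ∀ m a, m + 1 < n → ¬MapsTo σ (cyclicInterval a m) (cyclicInterval a m) := by
    intro m
    induction m using Nat.strong_induction_on with
    | _ m ih =>
      intro a hm hmaps
      rcases Nat.eq_zero_or_pos m with rfl | hpos
      · rw [cyclicInterval_zero] at hmaps
        exact hσ a (hmaps rfl)
      obtain ⟨k, hk, hmaps'⟩ := h (a + 1)
      refine ih (min k (m - 1)) (by omega) (a + 1) (by omega) ?_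
      rw [← cyclicInterval_inter_cyclicInterval_add_one hpos hk]
      exact hmaps.inter_inter hmaps'
  obtain ⟨m, hm, hmaps⟩ := h 0
  exact key m 0 hm hmaps

/-- The complement of an up-set for the order starting at `t` is a cyclic interval starting at
`t`, and it is `σ`-invariant when the up-set is closed under `σ`-preimages. -/
lemma mem_of_forall_not_mapsTo_cyclicInterval {σ : ZMod n → ZMod n} {t : ZMod n}
    (ht : ∀ m, m + 1 < n → ¬MapsTo σ (cyclicInterval t m) (cyclicInterval t m))
    {S : Set (ZMod n)} (hlast : t - 1 ∈ S)
    (hup : ∀ i j, i ∈ S → (i - t).val ≤ (j - t).val → j ∈ S) (hσ : ∀ j, σ j ∈ S → j ∈ S) :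
    t ∈ S := by
  classical
  by_contra htS
  have hex : ∃ p, ∃ i ∈ S, (i - t).val = p := ⟨_, t - 1, hlast, rfl⟩
  obtain ⟨i₀, hi₀S, hi₀⟩ := Nat.find_spec hex
  have hle : Nat.find hex ≤ n - 1 :=
    Nat.find_min' hex ⟨t - 1, hlast, ZMod.val_sub_one_sub_self t⟩
  have hpos : Nat.find hex ≠ 0 := by
    intro h0
    rw [h0, ZMod.val_eq_zero, sub_eq_zero] at hi₀
    exact htS (hi₀ ▸ hi₀S)
  have hcompl : Sᶜ = cyclicInterval t (Nat.find hex - 1) := by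
    ext i
    simp only [mem_compl_iff, cyclicInterval, mem_ofPred_eq]
    constructor
    · intro hi
      by_contra! hlt
      exact hi (hup i₀ i hi₀S (by omega))
    · intro hi hiS
      exact Nat.find_min hex (by omega) ⟨i, hiS, rfl⟩
  refine ht (Nat.find hex - 1) (by omega) ?_
  rw [← hcompl]
  exact fun i hi hσi => hi (hσ i hσi)

end CyclicInterval

section HamiltonianCycle

variable {n : ℕ} [NeZero n] {A : ZMod n → ZMod n → Prop} {t : ZMod n}

def evenFrom (t i : ZMod n) : Prop := Even (i - t).val

lemma reflTransGen_cutDigraph_of_val_le (hcyc : ∀ i, A i (i + 1)) {i j : ZMod n}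
    (hij : (i - t).val ≤ (j - t).val) : ReflTransGen (cutDigraph A (evenFrom t)) i j := by
  obtain ⟨d, hd⟩ := Nat.exists_eq_add_of_le hij
  clear hij
  induction d generalizing i with
  | zero =>
    obtain rfl : j = i := sub_left_injective (ZMod.val_injective n hd)
    exact .refl
  | succ d ih =>
    have hval : (i + 1 - t).val = (i - t).val + 1 := by
      rw [add_sub_right_comm]
      exact ZMod.val_add_one_of_lt (by have := (j - t).val_lt; omega)
    refine .head ⟨hcyc i, ?_⟩ (ih (by omega))
    simp only [evenFrom, hval, Nat.even_add_one]
    tauto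

lemma forall_reflTransGen_cutDigraph (hcyc : ∀ i, A i (i + 1))
    (hcut : ReflTransGen (cutDigraph A (evenFrom t)) (t - 1) t) (i j : ZMod n) :
    ReflTransGen (cutDigraph A (evenFrom t)) i j := by
  refine ((reflTransGen_cutDigraph_of_val_le hcyc ?_).trans hcut).trans
    (reflTransGen_cutDigraph_of_val_le hcyc (by simp))
  have := (i - t).val_lt
  have := ZMod.val_sub_one_sub_self t
  omega

/-- For `n` even every arc of the cycle crosses the partition, including the one entering `t`. -/
lemma reflTransGen_cutDigraph_sub_one_of_even (hcyc : ∀ i, A i (i + 1)) (hn : Even n) :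
    ReflTransGen (cutDigraph A (evenFrom t)) (t - 1) t := by
  refine .single ⟨by simpa using hcyc (t - 1), ?_⟩
  have := NeZero.ne n
  simp only [evenFrom, ZMod.val_sub_one_sub_self, sub_self, ZMod.val_zero, Nat.even_iff,
    iff_true] at hn ⊢
  omega

/-- An even chord jumping backwards over the cut has length `n + (j - t).val - (i - t).val`, so
for `n` odd its ends have positions of different parities. -/
lemma cutDigraph_of_val_lt (hn : Odd n) {i j : ZMod n} (hA : A i j) (heven : Even (j - i).val)
    (hlt : (j - t).val < (i - t).val) : cutDigraph A (evenFrom t) i j := by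
  refine ⟨hA, ?_⟩
  rw [show j - i = (j - t) - (i - t) by ring, ZMod.val_sub_of_lt hlt] at heven
  have := (i - t).val_lt
  simp only [evenFrom, Nat.even_iff, Nat.odd_iff] at heven hn ⊢
  omega

lemma reflTransGen_cutDigraph_sub_one_of_odd (hcyc : ∀ i, A i (i + 1)) (hn : Odd n)
    {σ : ZMod n → ZMod n} (hσA : ∀ i, A (σ i) i) (hσeven : ∀ i, Even (i - σ i).val)
    (ht : ∀ m, m + 1 < n → ¬MapsTo σ (cyclicInterval t m) (cyclicInterval t m)) :
    ReflTransGen (cutDigraph A (evenFrom t)) (t - 1) t := by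
  refine mem_of_forall_not_mapsTo_cyclicInterval ht (S := {i | ReflTransGen _ (t - 1) i}) .refl
    (fun i j hi hij => ReflTransGen.trans hi (reflTransGen_cutDigraph_of_val_le hcyc hij)) ?_
  intro j hj
  rcases le_or_gt (σ j - t).val (j - t).val with hle | hlt
  · exact ReflTransGen.trans hj (reflTransGen_cutDigraph_of_val_le hcyc hle)
  · exact ReflTransGen.tail hj (cutDigraph_of_val_lt hn (hσA j) (hσeven j) hlt)

theorem exists_forall_reflTransGen_cutDigraph (hcyc : ∀ i, A i (i + 1))
    {σ : ZMod n → ZMod n} (hσA : ∀ i, A (σ i) i) (hσne : ∀ i, σ i ≠ i)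
    (hσeven : ∀ i, Even (i - σ i).val) :
    ∃ t : ZMod n, ∀ i j, ReflTransGen (cutDigraph A (evenFrom t)) i j := by
  rcases Nat.even_or_odd n with hn | hn
  · exact ⟨0, forall_reflTransGen_cutDigraph hcyc
      (reflTransGen_cutDigraph_sub_one_of_even hcyc hn)⟩
  · obtain ⟨t, ht⟩ := exists_forall_not_mapsTo_cyclicInterval σ hσne
    exact ⟨t, forall_reflTransGen_cutDigraph hcyc
      (reflTransGen_cutDigraph_sub_one_of_odd hcyc hn hσA hσeven ht)⟩

end HamiltonianCycle

end PCDigraph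

/-- Let `D` be a Hamiltonian digraph and `C` a Hamiltonian cycle of `D`.
If for every vertex `v` of `D` there is an even chord of `C` with head `v`,
then `D` has a strong 2-partition. -/
theorem strongTwoPartition_of_even_chord_head {V : Type*} [Fintype V]
    (Adj : V → V → Prop) (hloopless : ∀ v : V, ¬ Adj v v)
    (x : ZMod (Fintype.card V) → V) (hC : IsHamCycle Adj x)
    (hchord : ∀ v : V, ∃ p q : ZMod (Fintype.card V),
      x q = v ∧ IsChord Adj x p q ∧ Even (chordLength (V := V) p q)) :
    HasStrongTwoPartition Adj := by
  obtain ⟨hbij, hcyc⟩ := hC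
  have : Nonempty V := ⟨x 0⟩
  have : NeZero (Fintype.card V) := ⟨Fintype.card_ne_zero⟩
  have hσ : ∀ i, ∃ p, Adj (x p) (x i) ∧ p ≠ i ∧ Even (i - p).val := by
    intro i
    obtain ⟨p, q, hq, ⟨hpq, -⟩, heven⟩ := hchord (x i)
    obtain rfl := hbij.1 hq
    exact ⟨p, hpq, fun h => hloopless _ (h ▸ hpq), heven⟩
  choose σ hσA hσne hσeven using hσ
  obtain ⟨t, ht⟩ := exists_forall_reflTransGen_cutDigraph (A := fun i j => Adj (x i) (x j))
    hcyc hσA hσne hσeven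
  exact hasStrongTwoPartition_of_bijective hbij _ ht
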